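/- arXiv:2310.18556 — 8 statements merged into one kernel-verified Lean document; each statement's English description precedes it below -/
import Mathlib

section
/- Lemma 1, deterministic imputation case (equation (5)): assume Fisher's sharp null, i.e. Y i true = Y i false for every unit i. Let G : Ω → (I → Option ℝ) → (I → ℝ) be any deterministic imputation algorithm, T : Ω → (I → ℝ) → ℝ any test statistic, t : ℝ, and z₀ ∈ Ω the observed assignment. Then the finite-population-exact null probability satisfies 𝒫.toMeasure {z | T z (G z (Ystar z)) ≥ t} = ∑_{z ∈ Ω} (if T z (G z (Ystar z₀)) ≥ t then 𝒫 z else 0); that is, the null distribution of the imputed-outcome statistic over the randomization distribution can be computed by re-imputing from the single observed realized-outcome vector Ystar z₀. -/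
open MeasureTheory

/-- Lemma 1, deterministic imputation case, equation (5). -/
theorem lemma1_deterministic_imputation
    {Ω : Type*} [Fintype Ω] [Nonempty Ω] [MeasurableSpace Ω] [MeasurableSingletonClass Ω]
    {I : Type*} [Fintype I]
    (P : PMF Ω)                       -- randomization distribution (Assumption 1)
    (arm : Ω → I → Bool)              -- treatment arm of each unit under each assignment
    (Y : I → Bool → ℝ)                -- fixed potential outcomes
    (η : (I → ℝ) → (I → Bool))        -- missingness mechanism (Assumption 2)
    (Yobs : Ω → I → ℝ)
    (hYobs : ∀ z i, Yobs z i = Y i (arm z i))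
    (Mis : Ω → I → Bool)
    (hMis : ∀ z, Mis z = η (Yobs z))
    (Ystar : Ω → I → Option ℝ)
    (hYstar : ∀ z i, Ystar z i = if Mis z i then none else some (Yobs z i))
    (hnull : ∀ i, Y i true = Y i false)  -- Fisher's sharp null
    (G : Ω → (I → Option ℝ) → (I → ℝ))   -- deterministic imputation algorithm
    (T : Ω → (I → ℝ) → ℝ)                -- test statistic
    (t : ℝ)
    (z₀ : Ω)                             -- observed assignment
    :
    P.toMeasure {z | T z (G z (Ystar z)) ≥ t}
      = ∑ z : Ω, (if T z (G z (Ystar z₀)) ≥ t then P z else 0) := by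
  have hY : ∀ z, Yobs z = Yobs z₀ := by
    intro z; funext i
    rw [hYobs, hYobs]
    cases arm z i <;> cases arm z₀ i <;> simp [hnull i]
  have hYs : ∀ z, Ystar z = Ystar z₀ := by
    intro z; funext i
    rw [hYstar, hYstar, hMis, hMis, hY z]
  have hmeas : MeasurableSet {z | T z (G z (Ystar z)) ≥ t} :=
    Set.Finite.measurableSet (Set.toFinite _)
  rw [PMF.toMeasure_apply_fintype]
  apply Finset.sum_congr rfl
  intro z _
  by_cases h : T z (G z (Ystar z₀)) ≥ t <;>
    simp [Set.indicator, h, hYs z]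
end

section
/- Theorem 1, almost-sure consistency with deterministic imputation: assume Fisher's sharp null, i.e. Y i true = Y i false for every unit i. Let G : Ω → (I → Option ℝ) → (I → ℝ) be a deterministic imputation algorithm, T : Ω → (I → ℝ) → ℝ a test statistic, z₀ ∈ Ω the observed assignment, t := T z₀ (G z₀ (Ystar z₀)) the observed statistic value, and p := (𝒫.toMeasure {z | T z (G z (Ystar z)) ≥ t}).toReal the finite-population-exact p-value. For L ≥ 1 define the Monte Carlo p-value p̂ L := (1/L) * ∑_{l=0}^{L-1} (indicator of the event {ω | T (Z l ω) (G (Z l ω) (Ystar z₀)) ≥ t}). Then p̂ L converges to p μ-almost surely as L → ∞. -/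
/-!
Under Fisher's sharp null every assignment produces the same observed outcomes, hence the same
missingness pattern and the same realized data `Ystar z₀`. The Monte Carlo indicators are therefore
`1_S (Z l)` for the fixed set `S = {z | T z (G z (Ystar z₀)) ≥ t}`, which is also the set whose
`P`-probability is the exact p-value; the strong law of large numbers finishes the proof.
-/

open MeasureTheory ProbabilityTheory Filter Topology

theorem yobs_eq_of_sharp_null {Ω I : Type*} {arm : Ω → I → Bool} {Y : I → Bool → ℝ}
    {Yobs : Ω → I → ℝ} (hYobs : ∀ z i, Yobs z i = Y i (arm z i))
    (hnull : ∀ i, Y i true = Y i false) (z z' : Ω) : Yobs z = Yobs z' := by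
  funext i
  rw [hYobs, hYobs]
  cases arm z i <;> cases arm z' i <;> simp [hnull i]

theorem ystar_eq_of_yobs_eq {Ω I : Type*} {η : (I → ℝ) → (I → Bool)} {Yobs : Ω → I → ℝ}
    {Mis : Ω → I → Bool} (hMis : ∀ z, Mis z = η (Yobs z)) {Ystar : Ω → I → Option ℝ}
    (hYstar : ∀ z i, Ystar z i = if Mis z i then none else some (Yobs z i)) {z z' : Ω}
    (h : Yobs z = Yobs z') : Ystar z = Ystar z' := by
  funext i
  rw [hYstar, hYstar, hMis, hMis, h]

section StrongLaw

variable {Ω Ω' : Type*} [MeasurableSpace Ω] [MeasurableSpace Ω'] {μ : Measure Ω'}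
  {ν : Measure Ω} {Z : ℕ → Ω' → Ω}

theorem strong_law_ae_comp (hZmeas : ∀ l, Measurable (Z l)) (hZlaw : ∀ l, μ.map (Z l) = ν)
    (hZindep : Pairwise fun i j => Z i ⟂ᵢ[μ] Z j) {f : Ω → ℝ} (hf : Measurable f)
    (hfint : Integrable f ν) :
    ∀ᵐ ω ∂μ, Tendsto (fun L : ℕ => (∑ l ∈ Finset.range L, f (Z l ω)) / L) atTop
      (𝓝 (∫ z, f z ∂ν)) := by
  have hident : ∀ l, IdentDistrib (Z l) (Z 0) μ μ := fun l =>
    ⟨(hZmeas l).aemeasurable, (hZmeas 0).aemeasurable, (hZlaw l).trans (hZlaw 0).symm⟩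
  have hint : Integrable (f ∘ Z 0) μ := by
    rw [← hZlaw 0] at hfint
    exact hfint.comp_measurable (hZmeas 0)
  have hmean : ∫ ω, f (Z 0 ω) ∂μ = ∫ z, f z ∂ν := by
    rw [← hZlaw 0, integral_map (hZmeas 0).aemeasurable hf.aestronglyMeasurable]
  rw [← hmean]
  exact strong_law_ae_real (fun l => f ∘ Z l) hint
    (fun i j hij => (hZindep hij).comp hf hf) fun l => (hident l).comp hf

theorem strong_law_ae_indicator [IsFiniteMeasure ν] (hZmeas : ∀ l, Measurable (Z l))
    (hZlaw : ∀ l, μ.map (Z l) = ν) (hZindep : Pairwise fun i j => Z i ⟂ᵢ[μ] Z j) {S : Set Ω}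
    (hS : MeasurableSet S) :
    ∀ᵐ ω ∂μ, Tendsto (fun L : ℕ => (∑ l ∈ Finset.range L, S.indicator (1 : Ω → ℝ) (Z l ω)) / L)
      atTop (𝓝 (ν.real S)) := by
  simpa only [integral_indicator_one hS] using
    strong_law_ae_comp hZmeas hZlaw hZindep (measurable_one.indicator hS)
      ((integrable_const 1).indicator hS)

end StrongLaw

theorem theorem1_as_consistency_deterministic_general
    {Ω : Type*} [Fintype Ω] [MeasurableSpace Ω] [MeasurableSingletonClass Ω]
    {I : Type*}
    {Ω' : Type*} [MeasurableSpace Ω'] (μ : Measure Ω')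
    (P : PMF Ω)                       -- randomization distribution (Assumption 1)
    (arm : Ω → I → Bool)              -- treatment arm of each unit under each assignment
    (Y : I → Bool → ℝ)                -- fixed potential outcomes
    (η : (I → ℝ) → (I → Bool))        -- missingness mechanism (Assumption 2)
    (Yobs : Ω → I → ℝ)
    (hYobs : ∀ z i, Yobs z i = Y i (arm z i))
    (Mis : Ω → I → Bool)
    (hMis : ∀ z, Mis z = η (Yobs z))
    (Ystar : Ω → I → Option ℝ)
    (hYstar : ∀ z i, Ystar z i = if Mis z i then none else some (Yobs z i))
    (hnull : ∀ i, Y i true = Y i false)  -- Fisher's sharp null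
    (G : Ω → (I → Option ℝ) → (I → ℝ))   -- deterministic imputation algorithm
    (T : Ω → (I → ℝ) → ℝ)                -- test statistic
    (z₀ : Ω)                             -- observed assignment
    (Z : ℕ → Ω' → Ω)                     -- Monte Carlo re-randomization draws
    (hZmeas : ∀ l, Measurable (Z l))
    (hZlaw : ∀ l, μ.map (Z l) = P.toMeasure)             -- identically distributed with law P
    (hZindep : iIndepFun Z μ)   -- independent
    (t : ℝ)
    (p : ℝ)
    (hp : p = (P.toMeasure {z | T z (G z (Ystar z)) ≥ t}).toReal)  -- exact p-value
    (phat : ℕ → Ω' → ℝ)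
    (hphat : ∀ L ω, phat L ω =
      (1 / (L : ℝ)) * ∑ l ∈ Finset.range L,
        (if T (Z l ω) (G (Z l ω) (Ystar z₀)) ≥ t then (1 : ℝ) else 0)) :
    ∀ᵐ ω ∂μ, Tendsto (fun L => phat L ω) atTop (nhds p) := by
  set S : Set Ω := {z | T z (G z (Ystar z₀)) ≥ t}
  have hYstar_const : ∀ z, Ystar z = Ystar z₀ := fun z =>
    ystar_eq_of_yobs_eq hMis hYstar (yobs_eq_of_sharp_null hYobs hnull z z₀)
  have hpS : p = P.toMeasure.real S := by
    simp only [hp, S, hYstar_const, measureReal_def]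
  filter_upwards [strong_law_ae_indicator hZmeas hZlaw (fun i j hij => hZindep.indepFun hij)
    (Set.toFinite S).measurableSet] with ω hω
  rw [hpS]
  convert hω using 2 with L
  simp only [hphat, Set.indicator_apply, S, Set.mem_ofPred_eq, Pi.one_apply]
  ring

/-- Theorem 1, almost-sure consistency with deterministic imputation. -/
theorem theorem1_as_consistency_deterministic
    {Ω : Type*} [Fintype Ω] [Nonempty Ω] [MeasurableSpace Ω] [MeasurableSingletonClass Ω]
    {I : Type*} [Fintype I]
    {Ω' : Type*} [MeasurableSpace Ω'] (μ : Measure Ω') [IsProbabilityMeasure μ]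
    (P : PMF Ω)                       -- randomization distribution (Assumption 1)
    (arm : Ω → I → Bool)              -- treatment arm of each unit under each assignment
    (Y : I → Bool → ℝ)                -- fixed potential outcomes
    (η : (I → ℝ) → (I → Bool))        -- missingness mechanism (Assumption 2)
    (Yobs : Ω → I → ℝ)
    (hYobs : ∀ z i, Yobs z i = Y i (arm z i))
    (Mis : Ω → I → Bool)
    (hMis : ∀ z, Mis z = η (Yobs z))
    (Ystar : Ω → I → Option ℝ)
    (hYstar : ∀ z i, Ystar z i = if Mis z i then none else some (Yobs z i))
    (hnull : ∀ i, Y i true = Y i false)  -- Fisher's sharp null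
    (G : Ω → (I → Option ℝ) → (I → ℝ))   -- deterministic imputation algorithm
    (T : Ω → (I → ℝ) → ℝ)                -- test statistic
    (z₀ : Ω)                             -- observed assignment
    (Z : ℕ → Ω' → Ω)                     -- Monte Carlo re-randomization draws
    (hZmeas : ∀ l, Measurable (Z l))
    (hZlaw : ∀ l, μ.map (Z l) = P.toMeasure)             -- identically distributed with law P
    (hZindep : iIndepFun Z μ)   -- independent
    (t : ℝ) (ht : t = T z₀ (G z₀ (Ystar z₀)))            -- observed statistic value
    (p : ℝ)
    (hp : p = (P.toMeasure {z | T z (G z (Ystar z)) ≥ t}).toReal)  -- exact p-value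
    (phat : ℕ → Ω' → ℝ)
    (hphat : ∀ L ω, phat L ω =
      (1 / (L : ℝ)) * ∑ l ∈ Finset.range L,
        (if T (Z l ω) (G (Z l ω) (Ystar z₀)) ≥ t then (1 : ℝ) else 0)) :
    ∀ᵐ ω ∂μ, Tendsto (fun L => phat L ω) atTop (nhds p) :=
  theorem1_as_consistency_deterministic_general μ P arm Y η Yobs hYobs Mis hMis Ystar hYstar hnull G
    T z₀ Z hZmeas hZlaw hZindep t p hp phat hphat
end

section
/- Lemma 2, deterministic case with covariate adjustment (equation (7)): assume Fisher's sharp null, i.e. Y i true = Y i false for every unit i. Let G : Ω → (I → Option ℝ) → (I → ℝ) be a deterministic imputation algorithm, H : (I → ℝ) → (I → ℝ) a deterministic covariate-adjustment prediction model (a function of the imputed outcomes only, not of the assignment; covariates are fixed and absorbed into H), and define the residual vector res z ystar := fun i => G z ystar i - H (G z ystar) i. Then for any test statistic T : Ω → (I → ℝ) → ℝ, any t : ℝ, and the observed assignment z₀ ∈ Ω, 𝒫.toMeasure {z | T z (res z (Ystar z)) ≥ t} = ∑_{z ∈ Ω} (if T z (res z (Ystar z₀)) ≥ t then 𝒫 z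 else 0). -/
open MeasureTheory

/-- Lemma 2, deterministic case with covariate adjustment, equation (7). -/
theorem lemma2_deterministic_covariate_adjustment
    {Ω : Type*} [Fintype Ω] [Nonempty Ω] [MeasurableSpace Ω] [MeasurableSingletonClass Ω]
    {I : Type*} [Fintype I]
    (P : PMF Ω)                       -- randomization distribution (Assumption 1)
    (arm : Ω → I → Bool)              -- treatment arm of each unit under each assignment
    (Y : I → Bool → ℝ)                -- fixed potential outcomes
    (η : (I → ℝ) → (I → Bool))        -- missingness mechanism (Assumption 2)
    (Yobs : Ω → I → ℝ)
    (hYobs : ∀ z i, Yobs z i = Y i (arm z i))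
    (Mis : Ω → I → Bool)
    (hMis : ∀ z, Mis z = η (Yobs z))
    (Ystar : Ω → I → Option ℝ)
    (hYstar : ∀ z i, Ystar z i = if Mis z i then none else some (Yobs z i))
    (hnull : ∀ i, Y i true = Y i false)   -- Fisher's sharp null
    (G : Ω → (I → Option ℝ) → (I → ℝ))    -- deterministic imputation algorithm
    (H : (I → ℝ) → (I → ℝ))               -- deterministic covariate-adjustment model
    (res : Ω → (I → Option ℝ) → (I → ℝ))  -- residual vector
    (hres : ∀ z ystar i, res z ystar i = G z ystar i - H (G z ystar) i)
    (T : Ω → (I → ℝ) → ℝ)                 -- test statistic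
    (t : ℝ)
    (z₀ : Ω)                              -- observed assignment
    :
    P.toMeasure {z | T z (res z (Ystar z)) ≥ t}
      = ∑ z : Ω, (if T z (res z (Ystar z₀)) ≥ t then P z else 0) := by
  have hY : ∀ z, Yobs z = Yobs z₀ := by
    intro z; funext i
    rw [hYobs, hYobs]
    cases arm z i <;> cases arm z₀ i <;> simp [hnull i]
  have hYs : ∀ z, Ystar z = Ystar z₀ := by
    intro z; funext i
    rw [hYstar, hYstar, hMis, hMis, hY z]
  have : {z | T z (res z (Ystar z)) ≥ t} = {z | T z (res z (Ystar z₀)) ≥ t} := by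
    ext z; simp [hYs z]
  rw [this, PMF.toMeasure_apply_fintype]
  refine Finset.sum_congr rfl fun z _ => ?_
  simp [Set.indicator]
end

section
/- Theorem 2, almost-sure consistency with covariate adjustment: assume Fisher's sharp null, i.e. Y i true = Y i false for every unit i. Let G : Ω → (I → Option ℝ) → (I → ℝ) be a deterministic imputation algorithm, H : (I → ℝ) → (I → ℝ) a deterministic covariate-adjustment prediction model, res z ystar := fun i => G z ystar i - H (G z ystar) i the residual vector, T : Ω → (I → ℝ) → ℝ a test statistic, z₀ ∈ Ω the observed assignment, t := T z₀ (res z₀ (Ystar z₀)), and p_adj := (𝒫.toMeasure {z | T z (res z (Ystar z)) ≥ t}).toReal the finite-population-exact covariate-adjusted p-value. For L ≥ 1 define p̂_adj L := (1/L) * ∑_{l=0}^{L-1} indicator {ω | T (Z l ω) (res (Z l ω) (Ystar z₀)) ≥ t}. Then p̂_adj L converges to p_adj μ-almost surely as L → ∞. -/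
/-! Under Fisher's sharp null the observed outcomes, hence the missingness pattern and the
realized outcomes `Ystar z`, do not depend on the assignment `z`. So `Ystar z` may be replaced by
`Ystar z₀` in the exact p-value, which then is the probability of exactly the event whose
Monte Carlo frequency `phatadj` records, and the strong law of large numbers applies. -/

open MeasureTheory ProbabilityTheory Filter

section StrongLaw

variable {Ω Ω' : Type*} [MeasurableSpace Ω] [MeasurableSpace Ω'] {μ : Measure Ω'}
  {ν : Measure Ω} {Z : ℕ → Ω' → Ω}

theorem ae_tendsto_average_comp_of_iIndepFun (hZmeas : ∀ l, Measurable (Z l))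
    (hZlaw : ∀ l, μ.map (Z l) = ν) (hZindep : iIndepFun Z μ) {f : Ω → ℝ} (hf : Measurable f)
    (hfint : Integrable f ν) :
    ∀ᵐ ω ∂μ, Tendsto (fun n : ℕ => (∑ l ∈ Finset.range n, f (Z l ω)) / n) atTop
      (nhds (∫ x, f x ∂ν)) := by
  have hmap : ∀ l, μ.map (f ∘ Z l) = ν.map f := fun l => by
    rw [← Measure.map_map hf (hZmeas l), hZlaw l]
  have hint : Integrable (f ∘ Z 0) μ := by
    rw [← hZlaw 0] at hfint
    exact hfint.comp_measurable (hZmeas 0)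
  have hident : ∀ l, IdentDistrib (f ∘ Z l) (f ∘ Z 0) μ μ := fun l =>
    ⟨(hf.comp (hZmeas l)).aemeasurable, (hf.comp (hZmeas 0)).aemeasurable, by rw [hmap, hmap]⟩
  have hindep : Pairwise fun i j => IndepFun (f ∘ Z i) (f ∘ Z j) μ := fun i j hij =>
    (hZindep.indepFun hij).comp hf hf
  have hmean : μ[f ∘ Z 0] = ∫ x, f x ∂ν := by
    rw [← hZlaw 0, integral_map (hZmeas 0).aemeasurable hf.aestronglyMeasurable]
    rfl
  rw [← hmean]
  exact strong_law_ae_real (fun l => f ∘ Z l) hint hindep hident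

theorem ae_tendsto_frequency_of_iIndepFun [IsFiniteMeasure ν] (hZmeas : ∀ l, Measurable (Z l))
    (hZlaw : ∀ l, μ.map (Z l) = ν) (hZindep : iIndepFun Z μ) (p : Ω → Prop) [DecidablePred p]
    (hp : MeasurableSet {x | p x}) :
    ∀ᵐ ω ∂μ, Tendsto (fun n : ℕ => (∑ l ∈ Finset.range n, if p (Z l ω) then (1 : ℝ) else 0) / n)
      atTop (nhds (ν.real {x | p x})) := by
  have := ae_tendsto_average_comp_of_iIndepFun hZmeas hZlaw hZindep
    (measurable_const.indicator hp) ((integrable_const (1 : ℝ)).indicator hp)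
  rw [integral_indicator_const _ hp, smul_eq_mul, mul_one] at this
  simpa only [Set.indicator_apply, Set.mem_ofPred_eq] using this

end StrongLaw

theorem eq_of_sharp_null {I α : Type*} {Y : I → Bool → α} (hnull : ∀ i, Y i true = Y i false)
    (i : I) (b b' : Bool) : Y i b = Y i b' := by
  cases b <;> cases b' <;> simp [hnull i]

theorem theorem2_as_consistency_covariate_adjustment_general
    {Ω : Type*} [Fintype Ω] [MeasurableSpace Ω] [MeasurableSingletonClass Ω]
    {I : Type*}
    {Ω' : Type*} [MeasurableSpace Ω'] (μ : Measure Ω')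
    (P : PMF Ω)                       -- randomization distribution (Assumption 1)
    (arm : Ω → I → Bool)              -- treatment arm of each unit under each assignment
    (Y : I → Bool → ℝ)                -- fixed potential outcomes
    (η : (I → ℝ) → (I → Bool))        -- missingness mechanism (Assumption 2)
    (Yobs : Ω → I → ℝ)
    (hYobs : ∀ z i, Yobs z i = Y i (arm z i))
    (Mis : Ω → I → Bool)
    (hMis : ∀ z, Mis z = η (Yobs z))
    (Ystar : Ω → I → Option ℝ)
    (hYstar : ∀ z i, Ystar z i = if Mis z i then none else some (Yobs z i))
    (hnull : ∀ i, Y i true = Y i false)   -- Fisher's sharp null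
    (res : Ω → (I → Option ℝ) → (I → ℝ))  -- residual vector
    (T : Ω → (I → ℝ) → ℝ)                 -- test statistic
    (z₀ : Ω)                              -- observed assignment
    (Z : ℕ → Ω' → Ω)                      -- Monte Carlo re-randomization draws
    (hZmeas : ∀ l, Measurable (Z l))
    (hZlaw : ∀ l, μ.map (Z l) = P.toMeasure)             -- identically distributed with law P
    (hZindep : iIndepFun Z μ)   -- independent
    (t : ℝ)
    (padj : ℝ)
    (hpadj : padj = (P.toMeasure {z | T z (res z (Ystar z)) ≥ t}).toReal)  -- exact p-value
    (phatadj : ℕ → Ω' → ℝ)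
    (hphatadj : ∀ L ω, phatadj L ω =
      (1 / (L : ℝ)) * ∑ l ∈ Finset.range L,
        (if T (Z l ω) (res (Z l ω) (Ystar z₀)) ≥ t then (1 : ℝ) else 0)) :
    ∀ᵐ ω ∂μ, Tendsto (fun L => phatadj L ω) atTop (nhds padj) := by
  have hYobs_const : ∀ z, Yobs z = Yobs z₀ := fun z => funext fun i => by
    rw [hYobs, hYobs, eq_of_sharp_null hnull]
  have hYstar_const : ∀ z, Ystar z = Ystar z₀ := fun z => funext fun i => by
    rw [hYstar, hYstar, hMis, hMis, hYobs_const]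
  have hpadj' : padj = P.toMeasure.real {z | T z (res z (Ystar z₀)) ≥ t} := by
    rw [hpadj, measureReal_def]
    simp only [hYstar_const]
  filter_upwards [ae_tendsto_frequency_of_iIndepFun hZmeas hZlaw hZindep
    (fun z => T z (res z (Ystar z₀)) ≥ t) MeasurableSet.of_discrete] with ω hω
  simpa only [hphatadj, hpadj', one_div_mul_eq_div] using hω

/-- Theorem 2, almost-sure consistency with covariate adjustment. -/
theorem theorem2_as_consistency_covariate_adjustment
    {Ω : Type*} [Fintype Ω] [Nonempty Ω] [MeasurableSpace Ω] [MeasurableSingletonClass Ω]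
    {I : Type*} [Fintype I]
    {Ω' : Type*} [MeasurableSpace Ω'] (μ : Measure Ω') [IsProbabilityMeasure μ]
    (P : PMF Ω)                       -- randomization distribution (Assumption 1)
    (arm : Ω → I → Bool)              -- treatment arm of each unit under each assignment
    (Y : I → Bool → ℝ)                -- fixed potential outcomes
    (η : (I → ℝ) → (I → Bool))        -- missingness mechanism (Assumption 2)
    (Yobs : Ω → I → ℝ)
    (hYobs : ∀ z i, Yobs z i = Y i (arm z i))
    (Mis : Ω → I → Bool)
    (hMis : ∀ z, Mis z = η (Yobs z))
    (Ystar : Ω → I → Option ℝ)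
    (hYstar : ∀ z i, Ystar z i = if Mis z i then none else some (Yobs z i))
    (hnull : ∀ i, Y i true = Y i false)   -- Fisher's sharp null
    (G : Ω → (I → Option ℝ) → (I → ℝ))    -- deterministic imputation algorithm
    (H : (I → ℝ) → (I → ℝ))               -- deterministic covariate-adjustment model
    (res : Ω → (I → Option ℝ) → (I → ℝ))  -- residual vector
    (hres : ∀ z ystar i, res z ystar i = G z ystar i - H (G z ystar) i)
    (T : Ω → (I → ℝ) → ℝ)                 -- test statistic
    (z₀ : Ω)                              -- observed assignment
    (Z : ℕ → Ω' → Ω)                      -- Monte Carlo re-randomization draws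
    (hZmeas : ∀ l, Measurable (Z l))
    (hZlaw : ∀ l, μ.map (Z l) = P.toMeasure)             -- identically distributed with law P
    (hZindep : iIndepFun Z μ)   -- independent
    (t : ℝ) (ht : t = T z₀ (res z₀ (Ystar z₀)))          -- observed statistic value
    (padj : ℝ)
    (hpadj : padj = (P.toMeasure {z | T z (res z (Ystar z)) ≥ t}).toReal)  -- exact p-value
    (phatadj : ℕ → Ω' → ℝ)
    (hphatadj : ∀ L ω, phatadj L ω =
      (1 / (L : ℝ)) * ∑ l ∈ Finset.range L,
        (if T (Z l ω) (res (Z l ω) (Ystar z₀)) ≥ t then (1 : ℝ) else 0)) :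
    ∀ᵐ ω ∂μ, Tendsto (fun L => phatadj L ω) atTop (nhds padj) :=
  theorem2_as_consistency_covariate_adjustment_general μ P arm Y η Yobs hYobs Mis hMis Ystar hYstar
    hnull res T z₀ Z hZmeas hZlaw hZindep t padj hpadj phatadj hphatadj
end

section
/- Theorem 2, Hoeffding concentration with covariate adjustment: in the setting of Theorem 2 (sharp null Y i true = Y i false for all i; deterministic imputation G and adjustment model H; residuals res z ystar := fun i => G z ystar i - H (G z ystar) i; statistic T; observed assignment z₀; t := T z₀ (res z₀ (Ystar z₀)); exact p-value p_adj := (𝒫.toMeasure {z | T z (res z (Ystar z)) ≥ t}).toReal; Monte Carlo p-value p̂_adj L := (1/L) * ∑_{l=0}^{L-1} indicator {ω | T (Z l ω) (res (Z l ω) (Ystar z₀)) ≥ t}), for every ε > 0 and every L ≥ 1 one has μ {ω | |p̂_adj L ω - p_adj| ≥ ε} ≤ ENNReal.ofReal (2 * Real.exp (-2 * L * ε^2)). -/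
/-!
Under the sharp null every assignment yields the same realized outcome vector, so the residuals
entering the exact p-value are those computed from `Ystar z₀`, and `padj` is just the
`P`-probability of the rejection region `A = {z | T z (res z (Ystar z₀)) ≥ t}`. The Monte Carlo
p-value is the empirical frequency of `A` among `L` i.i.d. draws from `P`; its indicators are
independent, `[0, 1]`-valued and sub-Gaussian with parameter `1 / 4` (Hoeffding's lemma), so the
two one-sided Hoeffding bounds add up to `2 exp (-2 L ε²)`.
-/

open MeasureTheory ProbabilityTheory

open scoped NNReal

section Hoeffding

variable {Ω : Type*} {mΩ : MeasurableSpace Ω} {μ : Measure Ω}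

lemma measure_abs_sum_range_ge_le_of_iIndepFun [IsFiniteMeasure μ] {X : ℕ → Ω → ℝ}
    (h_indep : iIndepFun X μ) {c : ℝ≥0} {n : ℕ}
    (h_subG : ∀ i < n, HasSubgaussianMGF (X i) c μ) {ε : ℝ} (hε : 0 ≤ ε) :
    μ {ω | ε ≤ |∑ i ∈ Finset.range n, X i ω|}
      ≤ ENNReal.ofReal (2 * Real.exp (-ε ^ 2 / (2 * n * c))) := by
  have h_indep_neg : iIndepFun (fun i ↦ -X i) μ :=
    h_indep.comp (fun _ x ↦ -x) (fun _ ↦ measurable_neg)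
  have upper := HasSubgaussianMGF.measure_sum_range_ge_le_of_iIndepFun h_indep h_subG hε
  have lower := HasSubgaussianMGF.measure_sum_range_ge_le_of_iIndepFun h_indep_neg
    (fun i hi ↦ (h_subG i hi).neg) hε
  have h_sub : {ω | ε ≤ |∑ i ∈ Finset.range n, X i ω|}
      ⊆ {ω | ε ≤ ∑ i ∈ Finset.range n, X i ω}
        ∪ {ω | ε ≤ ∑ i ∈ Finset.range n, (-X i) ω} := by
    intro ω hω
    simpa [Finset.sum_neg_distrib, le_abs] using hω
  calc μ {ω | ε ≤ |∑ i ∈ Finset.range n, X i ω|}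
      ≤ ENNReal.ofReal (μ.real {ω | ε ≤ ∑ i ∈ Finset.range n, X i ω}
          + μ.real {ω | ε ≤ ∑ i ∈ Finset.range n, (-X i) ω}) := by
        rw [ENNReal.ofReal_add measureReal_nonneg measureReal_nonneg, ofReal_measureReal,
          ofReal_measureReal]
        exact (measure_mono h_sub).trans (measure_union_le _ _)
    _ ≤ ENNReal.ofReal (2 * Real.exp (-ε ^ 2 / (2 * n * c))) :=
        ENNReal.ofReal_le_ofReal (by linarith)

lemma measure_abs_mean_sub_ge_le_of_mem_unitInterval [IsProbabilityMeasure μ]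
    {X : ℕ → Ω → ℝ} (h_indep : iIndepFun X μ) (h_meas : ∀ i, AEMeasurable (X i) μ)
    (h_mem : ∀ i, ∀ᵐ ω ∂μ, X i ω ∈ Set.Icc 0 1) {m : ℝ} (h_mean : ∀ i, μ[X i] = m)
    {n : ℕ} (hn : n ≠ 0) {ε : ℝ} (hε : 0 ≤ ε) :
    μ {ω | ε ≤ |1 / (n : ℝ) * ∑ i ∈ Finset.range n, X i ω - m|}
      ≤ ENNReal.ofReal (2 * Real.exp (-2 * n * ε ^ 2)) := by
  have hn_pos : (0 : ℝ) < n := by positivity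
  have h_subG : ∀ i < n, HasSubgaussianMGF (fun ω ↦ X i ω - m) (1 / 4) μ := by
    intro i _
    have h := hasSubgaussianMGF_of_mem_Icc (h_meas i) (h_mem i)
    rw [h_mean i] at h
    convert h
    norm_num
  have h_indep_centered : iIndepFun (fun i ω ↦ X i ω - m) μ :=
    h_indep.comp (fun _ x ↦ x - m) (fun _ ↦ measurable_id.sub_const m)
  have h_event : {ω | ε ≤ |1 / (n : ℝ) * ∑ i ∈ Finset.range n, X i ω - m|}
      = {ω | n * ε ≤ |∑ i ∈ Finset.range n, (X i ω - m)|} := by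
    ext ω
    rw [Set.mem_ofPred_eq, Set.mem_ofPred_eq, Finset.sum_sub_distrib, Finset.sum_const,
      Finset.card_range, nsmul_eq_mul, ← le_div_iff₀' hn_pos, ← abs_of_pos hn_pos, ← abs_div,
      abs_of_pos hn_pos]
    congr! 2
    field_simp
  rw [h_event]
  convert measure_abs_sum_range_ge_le_of_iIndepFun h_indep_centered h_subG
    (ε := n * ε) (by positivity) using 4
  push_cast
  field_simp
  ring

end Hoeffding

lemma measure_abs_mean_indicator_sub_ge_le {Ω' Ω : Type*} {mΩ' : MeasurableSpace Ω'}
    {mΩ : MeasurableSpace Ω} {μ : Measure Ω'} [IsProbabilityMeasure μ] {ν : Measure Ω}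
    {Z : ℕ → Ω' → Ω} (hZ_meas : ∀ l, Measurable (Z l)) (hZ_law : ∀ l, μ.map (Z l) = ν)
    (hZ_indep : iIndepFun Z μ) {A : Set Ω} (hA : MeasurableSet A) {n : ℕ} (hn : n ≠ 0)
    {ε : ℝ} (hε : 0 ≤ ε) :
    μ {ω | ε ≤ |1 / (n : ℝ) * ∑ l ∈ Finset.range n, A.indicator 1 (Z l ω) - ν.real A|}
      ≤ ENNReal.ofReal (2 * Real.exp (-2 * n * ε ^ 2)) := by
  have h_ind_meas : Measurable (A.indicator (1 : Ω → ℝ)) := measurable_one.indicator hA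
  refine measure_abs_mean_sub_ge_le_of_mem_unitInterval
    (X := fun l ω ↦ A.indicator 1 (Z l ω))
    (hZ_indep.comp (fun _ ↦ A.indicator 1) (fun _ ↦ h_ind_meas))
    (fun l ↦ (h_ind_meas.comp (hZ_meas l)).aemeasurable)
    (fun l ↦ ae_of_all _ fun ω ↦ ⟨Set.indicator_nonneg (fun _ _ ↦ zero_le_one) _,
      Set.indicator_le_self' (fun _ _ ↦ zero_le_one) _⟩)
    (fun l ↦ ?_) hn hε
  rw [← integral_map (hZ_meas l).aemeasurable h_ind_meas.aestronglyMeasurable, hZ_law l,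
    integral_indicator_one hA]

lemma realizedOutcomes_eq_of_sharpNull {Ω I : Type*} {arm : Ω → I → Bool} {Y : I → Bool → ℝ}
    {η : (I → ℝ) → I → Bool} {Yobs : Ω → I → ℝ} {Mis : Ω → I → Bool}
    {Ystar : Ω → I → Option ℝ} (hYobs : ∀ z i, Yobs z i = Y i (arm z i))
    (hMis : ∀ z, Mis z = η (Yobs z))
    (hYstar : ∀ z i, Ystar z i = if Mis z i then none else some (Yobs z i))
    (hnull : ∀ i, Y i true = Y i false) (z z' : Ω) :
    Ystar z = Ystar z' := by
  have hYobs_eq : Yobs z = Yobs z' := by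
    funext i
    rw [hYobs, hYobs]
    cases arm z i <;> cases arm z' i <;> simp [hnull]
  funext i
  rw [hYstar, hYstar, hMis, hMis, hYobs_eq]

theorem theorem2_hoeffding_covariate_adjustment_general
    {Ω : Type*} [Fintype Ω] [MeasurableSpace Ω] [MeasurableSingletonClass Ω]
    {I : Type*}
    {Ω' : Type*} [MeasurableSpace Ω'] (μ : Measure Ω') [IsProbabilityMeasure μ]
    (P : PMF Ω)                       -- randomization distribution (Assumption 1)
    (arm : Ω → I → Bool)              -- treatment arm of each unit under each assignment
    (Y : I → Bool → ℝ)                -- fixed potential outcomes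
    (η : (I → ℝ) → (I → Bool))        -- missingness mechanism (Assumption 2)
    (Yobs : Ω → I → ℝ)
    (hYobs : ∀ z i, Yobs z i = Y i (arm z i))
    (Mis : Ω → I → Bool)
    (hMis : ∀ z, Mis z = η (Yobs z))
    (Ystar : Ω → I → Option ℝ)
    (hYstar : ∀ z i, Ystar z i = if Mis z i then none else some (Yobs z i))
    (hnull : ∀ i, Y i true = Y i false)   -- Fisher's sharp null
    (res : Ω → (I → Option ℝ) → (I → ℝ))  -- residual vector
    (T : Ω → (I → ℝ) → ℝ)                 -- test statistic
    (z₀ : Ω)                              -- observed assignment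
    (Z : ℕ → Ω' → Ω)                      -- Monte Carlo re-randomization draws
    (hZmeas : ∀ l, Measurable (Z l))
    (hZlaw : ∀ l, μ.map (Z l) = P.toMeasure)             -- identically distributed with law P
    (hZindep : iIndepFun Z μ)   -- independent
    (t : ℝ)
    (padj : ℝ)
    (hpadj : padj = (P.toMeasure {z | T z (res z (Ystar z)) ≥ t}).toReal)  -- exact p-value
    (phatadj : ℕ → Ω' → ℝ)
    (hphatadj : ∀ L ω, phatadj L ω =
      (1 / (L : ℝ)) * ∑ l ∈ Finset.range L,
        (if T (Z l ω) (res (Z l ω) (Ystar z₀)) ≥ t then (1 : ℝ) else 0)) :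
    ∀ ε : ℝ, 0 < ε → ∀ L : ℕ, 1 ≤ L →
      μ {ω | |phatadj L ω - padj| ≥ ε} ≤ ENNReal.ofReal (2 * Real.exp (-2 * L * ε ^ 2)) := by
  intro ε hε L hL
  set A : Set Ω := {z | T z (res z (Ystar z₀)) ≥ t}
  have hpadj_A : padj = P.toMeasure.real A := by
    rw [hpadj, measureReal_def]
    congr 2
    ext z
    rw [Set.mem_ofPred_eq, Set.mem_ofPred_eq, realizedOutcomes_eq_of_sharpNull hYobs hMis hYstar hnull z z₀]
  have hphatadj_A : ∀ ω, phatadj L ω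
      = 1 / (L : ℝ) * ∑ l ∈ Finset.range L, A.indicator 1 (Z l ω) := by
    intro ω
    simp only [hphatadj, Set.indicator_apply, Pi.one_apply]
    rfl
  simp only [hpadj_A, hphatadj_A, ge_iff_le]
  exact measure_abs_mean_indicator_sub_ge_le hZmeas hZlaw hZindep A.toFinite.measurableSet
    (by omega) hε.le

/-- Theorem 2, Hoeffding concentration with covariate adjustment. -/
theorem theorem2_hoeffding_covariate_adjustment
    {Ω : Type*} [Fintype Ω] [Nonempty Ω] [MeasurableSpace Ω] [MeasurableSingletonClass Ω]
    {I : Type*} [Fintype I]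
    {Ω' : Type*} [MeasurableSpace Ω'] (μ : Measure Ω') [IsProbabilityMeasure μ]
    (P : PMF Ω)                       -- randomization distribution (Assumption 1)
    (arm : Ω → I → Bool)              -- treatment arm of each unit under each assignment
    (Y : I → Bool → ℝ)                -- fixed potential outcomes
    (η : (I → ℝ) → (I → Bool))        -- missingness mechanism (Assumption 2)
    (Yobs : Ω → I → ℝ)
    (hYobs : ∀ z i, Yobs z i = Y i (arm z i))
    (Mis : Ω → I → Bool)
    (hMis : ∀ z, Mis z = η (Yobs z))
    (Ystar : Ω → I → Option ℝ)
    (hYstar : ∀ z i, Ystar z i = if Mis z i then none else some (Yobs z i))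
    (hnull : ∀ i, Y i true = Y i false)   -- Fisher's sharp null
    (G : Ω → (I → Option ℝ) → (I → ℝ))    -- deterministic imputation algorithm
    (H : (I → ℝ) → (I → ℝ))               -- deterministic covariate-adjustment model
    (res : Ω → (I → Option ℝ) → (I → ℝ))  -- residual vector
    (hres : ∀ z ystar i, res z ystar i = G z ystar i - H (G z ystar) i)
    (T : Ω → (I → ℝ) → ℝ)                 -- test statistic
    (z₀ : Ω)                              -- observed assignment
    (Z : ℕ → Ω' → Ω)                      -- Monte Carlo re-randomization draws
    (hZmeas : ∀ l, Measurable (Z l))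
    (hZlaw : ∀ l, μ.map (Z l) = P.toMeasure)             -- identically distributed with law P
    (hZindep : iIndepFun Z μ)   -- independent
    (t : ℝ) (ht : t = T z₀ (res z₀ (Ystar z₀)))          -- observed statistic value
    (padj : ℝ)
    (hpadj : padj = (P.toMeasure {z | T z (res z (Ystar z)) ≥ t}).toReal)  -- exact p-value
    (phatadj : ℕ → Ω' → ℝ)
    (hphatadj : ∀ L ω, phatadj L ω =
      (1 / (L : ℝ)) * ∑ l ∈ Finset.range L,
        (if T (Z l ω) (res (Z l ω) (Ystar z₀)) ≥ t then (1 : ℝ) else 0)) :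
    ∀ ε : ℝ, 0 < ε → ∀ L : ℕ, 1 ≤ L →
      μ {ω | |phatadj L ω - padj| ≥ ε} ≤ ENNReal.ofReal (2 * Real.exp (-2 * L * ε ^ 2)) :=
  theorem2_hoeffding_covariate_adjustment_general μ P arm Y η Yobs hYobs Mis hMis Ystar hYstar hnull
    res T z₀ Z hZmeas hZlaw hZindep t padj hpadj phatadj hphatadj
end

section
/- Super-uniformity of the exact randomization p-value (proved within Theorem 3): let Ω be a nonempty finite type, 𝒫 : PMF Ω, and S : Ω → ℝ any test statistic, and define the randomization p-value pval ω := (𝒫.toMeasure {ω' | S ω' ≥ S ω}).toReal. Then for every α with 0 < α < 1, 𝒫.toMeasure {ω | pval ω ≤ α} ≤ ENNReal.ofReal α. -/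
open MeasureTheory

/-- super-uniformity of the exact randomization p-value,
proved within Theorem 3. -/
theorem exact_randomization_pvalue_superuniform
    {Ω : Type*} [Fintype Ω] [Nonempty Ω] [MeasurableSpace Ω] [MeasurableSingletonClass Ω]
    (P : PMF Ω)                   -- randomization distribution (Assumption 1)
    (S : Ω → ℝ)                   -- test statistic
    (pval : Ω → ℝ)                -- exact randomization p-value
    (hpval : ∀ ω, pval ω = (P.toMeasure {ω' | S ω' ≥ S ω}).toReal) :
    ∀ α : ℝ, 0 < α → α < 1 →
      P.toMeasure {ω | pval ω ≤ α} ≤ ENNReal.ofReal α := by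
  intro α hα0 hα1
  by_cases hA : {ω | pval ω ≤ α}.Nonempty
  · obtain ⟨ω₀, hω₀, hmin⟩ := Set.exists_min_image _ S (Set.toFinite _) hA
    have hsub : {ω | pval ω ≤ α} ⊆ {ω' | S ω' ≥ S ω₀} := fun ω hω => hmin ω hω
    calc P.toMeasure {ω | pval ω ≤ α} ≤ P.toMeasure {ω' | S ω' ≥ S ω₀} :=
          measure_mono hsub
      _ ≤ ENNReal.ofReal α := by
          have h1 : P.toMeasure {ω' | S ω' ≥ S ω₀} ≠ ⊤ := measure_ne_top _ _
          rw [← ENNReal.ofReal_toReal h1, ← hpval ω₀]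
          exact ENNReal.ofReal_le_ofReal hω₀
  · rw [Set.not_nonempty_iff_eq_empty.mp hA]
    simp
end

section
/- Exactness identity for the discrete randomization p-value under positivity (proof step of Theorem 3): let Ω be a nonempty finite type, 𝒫 : PMF Ω with 𝒫 ω > 0 for every ω ∈ Ω, S : Ω → ℝ a test statistic, and pval ω := (𝒫.toMeasure {ω' | S ω' ≥ S ω}).toReal. Then for every ω ∈ Ω the events coincide: {ω' | pval ω' ≤ pval ω} = {ω' | S ω' ≥ S ω}; in particular 𝒫.toMeasure {ω' | pval ω' ≤ pval ω} = ENNReal.ofReal (pval ω). -/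
open MeasureTheory

/-- exactness identity for the discrete randomization p-value under
positivity, proof step of Theorem 3. -/
theorem exact_randomization_pvalue_exactness
    {Ω : Type*} [Fintype Ω] [Nonempty Ω] [MeasurableSpace Ω] [MeasurableSingletonClass Ω]
    (P : PMF Ω)                   -- randomization distribution (Assumption 1)
    (hpos : ∀ ω, 0 < P ω)         -- strictly positive probabilities
    (S : Ω → ℝ)                   -- test statistic
    (pval : Ω → ℝ)                -- exact randomization p-value
    (hpval : ∀ ω, pval ω = (P.toMeasure {ω' | S ω' ≥ S ω}).toReal) :
    ∀ ω : Ω,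
      {ω' | pval ω' ≤ pval ω} = {ω' | S ω' ≥ S ω} ∧
        P.toMeasure {ω' | pval ω' ≤ pval ω} = ENNReal.ofReal (pval ω) := by
  have hfin : ∀ s : Set Ω, P.toMeasure s ≠ ⊤ := fun s => measure_ne_top _ s
  have hmono : ∀ ω ω' : Ω, S ω ≤ S ω' → pval ω' ≤ pval ω := by
    intro ω ω' h
    rw [hpval, hpval]
    refine ENNReal.toReal_le_toReal (hfin _) (hfin _) |>.mpr ?_
    apply measure_mono
    intro x hx
    exact le_trans h hx
  have hstrict : ∀ ω ω' : Ω, S ω' < S ω → pval ω < pval ω' := by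
    intro ω ω' h
    rw [hpval, hpval]
    refine ENNReal.toReal_lt_toReal (hfin _) (hfin _) |>.mpr ?_
    have hsub : ({ω'} : Set Ω) ∪ {x | S x ≥ S ω} ⊆ {x | S x ≥ S ω'} := by
      rintro x (hx | hx)
      · simp only [Set.mem_singleton_iff] at hx
        rw [Set.mem_setOf_eq, hx]
      · exact le_of_lt (lt_of_lt_of_le h hx)
    have hdisj : Disjoint ({ω'} : Set Ω) {x | S x ≥ S ω} := by
      rw [Set.disjoint_left]
      rintro x rfl hx
      exact absurd hx (not_le.mpr h)
    have hmeasset : MeasurableSet {x | S x ≥ S ω} := (Set.toFinite _).measurableSet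
    calc P.toMeasure {x | S x ≥ S ω}
        < P.toMeasure {ω'} + P.toMeasure {x | S x ≥ S ω} := by
          rw [add_comm]
          refine ENNReal.lt_add_right (hfin _) ?_
          rw [P.toMeasure_apply_singleton _ (measurableSet_singleton _)]
          exact (hpos ω').ne'
      _ = P.toMeasure (({ω'} : Set Ω) ∪ {x | S x ≥ S ω}) := by
          rw [measure_union hdisj hmeasset]
      _ ≤ P.toMeasure {x | S x ≥ S ω'} := measure_mono hsub
  intro ω
  have hset : {ω' | pval ω' ≤ pval ω} = {ω' | S ω' ≥ S ω} := by
    ext ω'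
    simp only [Set.mem_setOf_eq]
    constructor
    · intro h
      by_contra hc
      exact absurd h (not_le.mpr (hstrict ω ω' (not_le.mp hc)))
    · exact hmono ω ω'
  refine ⟨hset, ?_⟩
  rw [hset, hpval, ENNReal.ofReal_toReal (hfin _)]
end

section
/- Theorem 3 (finite-population-valid confidence region via inverting imputation-assisted randomization tests): let Ω be a nonempty finite type, 𝒫 : PMF Ω, and f : Ω → ℝ the randomization statistic computed from the transformed realized outcomes at the true causal parameter (well defined independently of the assignment, under the true effect model and Assumption 3). On a probability space (Ω', μ), let (Z, Z_0, Z_1, Z_2, …) be an i.i.d. family of measurable Ω-valued random variables with common law 𝒫.toMeasure, where Z is the observed assignment and (Z_l) are the Monte Carlo re-randomization draws, and for L ≥ 1 define the Monte Carlo p-value at the true parameter p̂ L := (1/L) * ∑_{l=0}^{L-1} indicator {ω | f (Z_l ω) ≥ f (Z ω)}. Then for every α with 0 < α < 1, liminf_{L → ∞} (μ {ω | p̂ L ω ≥ α}).toReal ≥ 1 - α; equivalently, the confidence region CR = {β₀ : p̂(β₀) ≥ α} covers the true causal parameter with asymptotic probability at least 1 - α as the number of re-imputation runs grows. -/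
/-!
At the true parameter the statistic `f` is fixed, so the ideal p-value of the observed
assignment `Z` is `p(Z) = 𝒫 {z' | f z' ≥ f Z}`. It is super-uniform: the assignments with
`p(z) ≤ α` form an upper set of `f`, hence a single upper tail of probability at most `α`.
By the strong law of large numbers, applied simultaneously to every reference
assignment in place of `Z`, the Monte Carlo p-value converges almost surely to `p(Z)`;
Fatou's lemma for sets then bounds the liminf of the coverage probabilities below by `μ {α < p(Z)} ≥ 1 - α`.
-/

open MeasureTheory ProbabilityTheory Filter Topology Finset

section Fatou

variable {α : Type*} [MeasurableSpace α] {μ : Measure α} [IsFiniteMeasure μ]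

theorem measureReal_liminf_le_liminf_measureReal (s : ℕ → Set α) :
    μ.real (liminf s atTop) ≤ liminf (fun n => μ.real (s n)) atTop := by
  set I : ℕ → Set α := fun n => ⋂ i ≥ n, s i
  have hI : Monotone I := fun m n hmn _ hx =>
    Set.mem_iInter₂.2 fun i hi => Set.mem_iInter₂.1 hx i (hmn.trans hi)
  have hlim : Tendsto (fun n => μ.real (I n)) atTop (𝓝 (μ.real (⋃ n, I n))) :=
    (ENNReal.tendsto_toReal (measure_ne_top _ _)).comp (tendsto_measure_iUnion_atTop hI)
  have hbdd : IsCoboundedUnder (· ≥ ·) atTop fun n => μ.real (s n) :=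
    isCoboundedUnder_ge_of_le atTop fun n => measureReal_mono (Set.subset_univ (s n))
  rw [liminf_eq_iSup_iInf_of_nat]
  refine le_of_tendsto' hlim fun n => le_liminf_of_le hbdd ?_
  filter_upwards [eventually_ge_atTop n] with i hi
  exact measureReal_mono fun x hx => Set.mem_iInter₂.1 hx i hi

theorem measureReal_lt_le_liminf_measureReal_le {X : ℕ → α → ℝ} {Y : α → ℝ}
    (hXY : ∀ᵐ x ∂μ, Tendsto (X · x) atTop (𝓝 (Y x))) (c : ℝ) :
    μ.real {x | c < Y x} ≤ liminf (fun n => μ.real {x | c ≤ X n x}) atTop := by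
  refine le_trans ?_ (measureReal_liminf_le_liminf_measureReal _)
  refine ENNReal.toReal_mono (measure_ne_top _ _) (measure_mono_ae (hXY.mono fun x hx hcx => ?_))
  change x ∈ liminf (fun n => {x | c ≤ X n x}) atTop
  rw [mem_liminf_iff_eventually_mem]
  exact (hx.eventually_const_lt hcx).mono fun _ h => h.le

end Fatou

section PValue

variable {Ω : Type*} [MeasurableSpace Ω]

noncomputable def randomizationPValue (ν : Measure Ω) (f : Ω → ℝ) (z : Ω) : ℝ :=
  ν.real {z' | f z ≤ f z'}

theorem measureReal_randomizationPValue_le [Finite Ω] (ν : Measure Ω) [IsFiniteMeasure ν]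
    (f : Ω → ℝ) {α : ℝ} (hα : 0 ≤ α) :
    ν.real {z | randomizationPValue ν f z ≤ α} ≤ α := by
  rcases Set.eq_empty_or_nonempty {z | randomizationPValue ν f z ≤ α} with hempty | hne
  · simpa [hempty] using hα
  obtain ⟨z₀, hz₀, hmin⟩ := Set.exists_min_image _ f (Set.toFinite _) hne
  calc ν.real {z | randomizationPValue ν f z ≤ α}
      ≤ ν.real {z' | f z₀ ≤ f z'} := measureReal_mono hmin
    _ ≤ α := hz₀

theorem one_sub_le_measureReal_lt_randomizationPValue [Finite Ω] [MeasurableSingletonClass Ω]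
    {Ω' : Type*} [MeasurableSpace Ω'] {μ : Measure Ω'} {ν : Measure Ω} [IsProbabilityMeasure ν]
    {Z : Ω' → Ω} (hZ : Measurable Z) (hlaw : μ.map Z = ν) (f : Ω → ℝ) {α : ℝ} (hα : 0 ≤ α) :
    1 - α ≤ μ.real {ω | α < randomizationPValue ν f (Z ω)} := by
  have hcompl : {z | α < randomizationPValue ν f z} = {z | randomizationPValue ν f z ≤ α}ᶜ := by
    ext z
    simp
  change 1 - α ≤ μ.real (Z ⁻¹' {z | α < randomizationPValue ν f z})
  rw [← map_measureReal_apply hZ .of_discrete, hlaw, hcompl, probReal_compl_eq_one_sub .of_discrete]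
  linarith [measureReal_randomizationPValue_le ν f hα]

end PValue

section StrongLaw

variable {Ω' E : Type*} [MeasurableSpace Ω'] [MeasurableSpace E] {μ : Measure Ω'}
  [IsFiniteMeasure μ] {ν : Measure E} {X : ℕ → Ω' → E}

theorem ae_tendsto_average_indicator (hX : ∀ l, Measurable (X l)) (hlaw : ∀ l, μ.map (X l) = ν)
    (hindep : Pairwise fun i j => IndepFun (X i) (X j) μ) {S : Set E} (hS : MeasurableSet S) :
    ∀ᵐ ω ∂μ, Tendsto (fun L : ℕ => (L : ℝ)⁻¹ * ∑ l ∈ range L, S.indicator (1 : E → ℝ) (X l ω))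
      atTop (𝓝 (ν.real S)) := by
  have hind : Measurable (S.indicator (1 : E → ℝ)) := measurable_one.indicator hS
  set Y : ℕ → Ω' → ℝ := fun l => S.indicator 1 ∘ X l
  have hint : Integrable (Y 0) μ :=
    ((integrable_indicator_iff hS).2 (integrable_const 1).integrableOn).comp_measurable (hX 0)
  have hident : ∀ l, IdentDistrib (Y l) (Y 0) μ μ := fun l =>
    IdentDistrib.comp ⟨(hX l).aemeasurable, (hX 0).aemeasurable, by rw [hlaw, hlaw]⟩ hind
  have hmean : μ[Y 0] = ν.real S := by
    rw [← hlaw 0, ← integral_indicator_one hS,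
      integral_map (hX 0).aemeasurable hind.aestronglyMeasurable]
    rfl
  have hslln := strong_law_ae Y hint (fun i j hij => (hindep hij).comp hind hind) hident
  rw [hmean] at hslln
  simpa [Y] using hslln

theorem ae_tendsto_randomizationPValue [Countable E] [MeasurableSingletonClass E]
    (hX : ∀ l, Measurable (X l)) (hlaw : ∀ l, μ.map (X l) = ν)
    (hindep : Pairwise fun i j => IndepFun (X i) (X j) μ) (f : E → ℝ) :
    ∀ᵐ ω ∂μ, ∀ z, Tendsto (fun L : ℕ => (L : ℝ)⁻¹ *
        ∑ l ∈ range L, if f z ≤ f (X l ω) then (1 : ℝ) else 0)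
      atTop (𝓝 (randomizationPValue ν f z)) := by
  refine ae_all_iff.2 fun z => ?_
  filter_upwards [ae_tendsto_average_indicator hX hlaw hindep
    (MeasurableSet.of_discrete (s := {z' | f z ≤ f z'}))] with ω hω
  simpa [Set.indicator_apply, randomizationPValue] using hω

end StrongLaw

theorem theorem3_confidence_region_coverage_general
    {Ω : Type*} [Fintype Ω] [MeasurableSpace Ω] [MeasurableSingletonClass Ω]
    {Ω' : Type*} [MeasurableSpace Ω'] (μ : Measure Ω') [IsProbabilityMeasure μ]
    (P : PMF Ω)                   -- randomization distribution (Assumption 1)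
    (f : Ω → ℝ)                   -- randomization statistic at the true causal parameter
    (ZZ : Option ℕ → Ω' → Ω)      -- observed assignment and Monte Carlo draws
    (hZZmeas : ∀ j, Measurable (ZZ j))
    (hZZlaw : ∀ j, μ.map (ZZ j) = P.toMeasure)            -- common law
    (hZZindep : iIndepFun ZZ μ)  -- i.i.d. family
    (phat : ℕ → Ω' → ℝ)           -- Monte Carlo p-value at the true parameter
    (hphat : ∀ L ω, phat L ω =
      (1 / (L : ℝ)) * ∑ l ∈ Finset.range L,
        (if f (ZZ (some l) ω) ≥ f (ZZ none ω) then (1 : ℝ) else 0)) :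
    ∀ α : ℝ, 0 < α → α < 1 →
      (1 : ℝ) - α ≤ atTop.liminf (fun L => (μ {ω | phat L ω ≥ α}).toReal) := by
  intro α hα _
  have hconv : ∀ᵐ ω ∂μ, Tendsto (phat · ω) atTop
      (𝓝 (randomizationPValue P.toMeasure f (ZZ none ω))) := by
    filter_upwards [ae_tendsto_randomizationPValue (fun l => hZZmeas (some l))
      (fun l => hZZlaw (some l)) (fun i j hij => hZZindep.indepFun (Option.some_injective _ |>.ne hij))
      f] with ω hω
    simpa only [hphat, one_div] using hω (ZZ none ω)
  calc 1 - α ≤ μ.real {ω | α < randomizationPValue P.toMeasure f (ZZ none ω)} :=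
        one_sub_le_measureReal_lt_randomizationPValue (hZZmeas none) (hZZlaw none) f hα.le
    _ ≤ _ := measureReal_lt_le_liminf_measureReal_le hconv α

/-- Theorem 3: finite-population-valid confidence region via inverting
imputation-assisted randomization tests.  The family `ZZ` models the observed
assignment `ZZ none` together with the Monte Carlo re-randomization draws
`ZZ (some l)`, all i.i.d. with common law `P.toMeasure`. -/
theorem theorem3_confidence_region_coverage
    {Ω : Type*} [Fintype Ω] [Nonempty Ω] [MeasurableSpace Ω] [MeasurableSingletonClass Ω]
    {Ω' : Type*} [MeasurableSpace Ω'] (μ : Measure Ω') [IsProbabilityMeasure μ]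
    (P : PMF Ω)                   -- randomization distribution (Assumption 1)
    (f : Ω → ℝ)                   -- randomization statistic at the true causal parameter
    (ZZ : Option ℕ → Ω' → Ω)      -- observed assignment and Monte Carlo draws
    (hZZmeas : ∀ j, Measurable (ZZ j))
    (hZZlaw : ∀ j, μ.map (ZZ j) = P.toMeasure)            -- common law
    (hZZindep : iIndepFun ZZ μ)  -- i.i.d. family
    (phat : ℕ → Ω' → ℝ)           -- Monte Carlo p-value at the true parameter
    (hphat : ∀ L ω, phat L ω =
      (1 / (L : ℝ)) * ∑ l ∈ Finset.range L,
        (if f (ZZ (some l) ω) ≥ f (ZZ none ω) then (1 : ℝ) else 0)) :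
    ∀ α : ℝ, 0 < α → α < 1 →
      (1 : ℝ) - α ≤ atTop.liminf (fun L => (μ {ω | phat L ω ≥ α}).toReal) :=
  theorem3_confidence_region_coverage_general μ P f ZZ hZZmeas hZZlaw hZZindep phat hphat
end
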